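/- The constraint set defined by N·log₂(1 + 1/D) ≤ T·B·log₂(1 + E·H/(T·δ²)) over variables (D, T, E) ∈ (0,∞)³, with constants N, B, H, δ² > 0, is a convex set. -/

import Mathlib

/-!
`log (1 + 1/D) = -log (D / (D + 1))` is convex, being minus the logarithm of a positive concave
function. `T * log (1 + E H / (T δ²))` is the perspective of the concave function
`e ↦ log (1 + e H / δ²)`, hence jointly concave in `(T, E)`. The constraint set is therefore a
sublevel set of a convex function on the open positive orthant.
-/

open Real Set

theorem ConcaveOn.log {E : Type*} [AddCommMonoid E] [Module ℝ E] {s : Set E} {f : E → ℝ}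
    (hf : ConcaveOn ℝ s f) (hpos : ∀ x ∈ s, 0 < f x) : ConcaveOn ℝ s fun x => Real.log (f x) := by
  refine ⟨hf.1, fun x hx y hy a b ha hb hab => ?_⟩
  calc a • Real.log (f x) + b • Real.log (f y) ≤ Real.log (a • f x + b • f y) :=
        strictConcaveOn_log_Ioi.concaveOn.2 (hpos x hx) (hpos y hy) ha hb hab
    _ ≤ Real.log (f (a • x + b • y)) :=
        Real.log_le_log ((convex_Ioi (0 : ℝ)) (hpos x hx) (hpos y hy) ha hb hab)
          (hf.2 hx hy ha hb hab)

theorem concaveOn_div_add_one : ConcaveOn ℝ (Ioi (-1)) fun x : ℝ => x / (x + 1) := by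
  refine ⟨convex_Ioi (-1), fun x (hx : -1 < x) y (hy : -1 < y) a b ha hb hab => ?_⟩
  have hxy : -1 < a * x + b * y := convex_Ioi (-1 : ℝ) hx hy ha hb hab
  obtain rfl : b = 1 - a := by linarith
  have hx1 : 0 < x + 1 := by linarith
  have hy1 : 0 < y + 1 := by linarith
  simp only [smul_eq_mul]
  rw [le_div_iff₀ (by linarith)]
  field_simp
  nlinarith [mul_nonneg (mul_nonneg ha hb) (sq_nonneg (x - y))]

theorem convexOn_log_one_add_inv : ConvexOn ℝ (Ioi 0) fun x : ℝ => log (1 + x⁻¹) := by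
  have h := (concaveOn_div_add_one.subset (Ioi_subset_Ioi (by norm_num)) (convex_Ioi 0)).log
    fun x (hx : 0 < x) => by positivity
  refine h.neg.congr fun x (hx : 0 < x) => ?_
  rw [Pi.neg_apply, ← log_inv, inv_div, add_div, div_self hx.ne', one_div]

theorem concaveOn_log_one_add_mul {c : ℝ} (hc : 0 ≤ c) :
    ConcaveOn ℝ (Ici 0) fun u : ℝ => log (1 + c * u) := by
  refine ConcaveOn.log ?_ fun u (hu : 0 ≤ u) => by positivity
  exact ((LinearMap.mul ℝ ℝ c).concaveOn (convex_Ici 0)).add_const 1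
    |>.congr fun u _ => add_comm _ _

section Perspective

variable {E : Type*} [AddCommGroup E] [Module ℝ E]

theorem inv_smul_add_smul_eq {t₁ t₂ a b : ℝ} (ht₁ : t₁ ≠ 0) (ht₂ : t₂ ≠ 0)
    (ht : a * t₁ + b * t₂ ≠ 0) (e₁ e₂ : E) :
    (a * t₁ + b * t₂)⁻¹ • (a • e₁ + b • e₂) =
      (a * t₁ / (a * t₁ + b * t₂)) • (t₁⁻¹ • e₁) + (b * t₂ / (a * t₁ + b * t₂)) • (t₂⁻¹ • e₂) := by
  simp only [smul_add, smul_smul]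
  congr 2 <;> field_simp

theorem ConcaveOn.perspective {s : Set E} {g : E → ℝ} (hg : ConcaveOn ℝ s g) :
    ConcaveOn ℝ {p : ℝ × E | 0 < p.1 ∧ p.1⁻¹ • p.2 ∈ s} fun p => p.1 * g (p.1⁻¹ • p.2) := by
  have weights : ∀ ⦃t₁ t₂ a b : ℝ⦄, 0 < t₁ → 0 < t₂ → 0 ≤ a → 0 ≤ b → a + b = 1 →
      0 < a * t₁ + b * t₂ ∧ 0 ≤ a * t₁ / (a * t₁ + b * t₂) ∧ 0 ≤ b * t₂ / (a * t₁ + b * t₂) ∧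
        a * t₁ / (a * t₁ + b * t₂) + b * t₂ / (a * t₁ + b * t₂) = 1 := by
    intro t₁ t₂ a b ht₁ ht₂ ha hb hab
    have ht : 0 < a * t₁ + b * t₂ := convex_Ioi (0 : ℝ) ht₁ ht₂ ha hb hab
    exact ⟨ht, by positivity, by positivity, by rw [← add_div, div_self ht.ne']⟩
  refine ⟨fun ⟨t₁, e₁⟩ ⟨ht₁, he₁⟩ ⟨t₂, e₂⟩ ⟨ht₂, he₂⟩ a b ha hb hab => ?_,
    fun ⟨t₁, e₁⟩ ⟨ht₁, he₁⟩ ⟨t₂, e₂⟩ ⟨ht₂, he₂⟩ a b ha hb hab => ?_⟩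
  all_goals
    obtain ⟨ht, hw₁, hw₂, hw⟩ := weights ht₁ ht₂ ha hb hab
    simp only [Prod.smul_mk, Prod.mk_add_mk, smul_eq_mul, mem_ofPred_eq] at *
    rw [inv_smul_add_smul_eq ht₁.ne' ht₂.ne' ht.ne']
  · exact ⟨ht, hg.1 he₁ he₂ hw₁ hw₂ hw⟩
  · have := mul_le_mul_of_nonneg_left (hg.2 he₁ he₂ hw₁ hw₂ hw) ht.le
    rw [smul_eq_mul, smul_eq_mul] at this
    convert this using 1
    field_simp

end Perspective

theorem concaveOn_mul_log_one_add_mul_div {c : ℝ} (hc : 0 ≤ c) :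
    ConcaveOn ℝ (Ioi 0 ×ˢ Ici 0) fun p : ℝ × ℝ => p.1 * log (1 + c * p.2 / p.1) := by
  refine ((concaveOn_log_one_add_mul hc).perspective.subset ?_ ?_).congr ?_
  · rintro ⟨t, e⟩ ⟨ht : 0 < t, he : 0 ≤ e⟩
    exact ⟨ht, show 0 ≤ t⁻¹ * e by positivity⟩
  · exact (convex_Ioi 0).prod (convex_Ici 0)
  · rintro ⟨t, e⟩ -
    simp only [smul_eq_mul]
    rw [mul_div_assoc, div_eq_inv_mul]

/-- The successful-transmission constraint set
`{(D, T, E) ∈ (0,∞)³ : N·log₂(1 + 1/D) ≤ T·B·log₂(1 + E·H/(T·δ²))}` is convex. -/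
theorem transmission_constraint_convex (N B H δ2 : ℝ)
    (hN : 0 < N) (hB : 0 < B) (hH : 0 < H) (hδ : 0 < δ2) :
    Convex ℝ {p : ℝ × ℝ × ℝ | 0 < p.1 ∧ 0 < p.2.1 ∧ 0 < p.2.2 ∧
      N * Real.logb 2 (1 + 1 / p.1) ≤
        p.2.1 * B * Real.logb 2 (1 + p.2.2 * H / (p.2.1 * δ2))} := by
  set U : Set (ℝ × ℝ × ℝ) := Ioi 0 ×ˢ Ioi 0 ×ˢ Ioi 0
  have hU : Convex ℝ U := (convex_Ioi 0).prod ((convex_Ioi 0).prod (convex_Ioi 0))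
  have hlog2 : 0 < log 2 := log_pos one_lt_two
  have hD : ConvexOn ℝ U fun p => N * logb 2 (1 + 1 / p.1) := by
    refine ((convexOn_log_one_add_inv.comp_linearMap (LinearMap.fst ℝ ℝ (ℝ × ℝ))).subset
      (fun p hp => hp.1) hU |>.smul (div_nonneg hN.le hlog2.le)).congr fun p _ => ?_
    simp only [Function.comp_apply, LinearMap.fst_apply, smul_eq_mul, logb, one_div]
    ring
  have hTE : ConcaveOn ℝ U fun p => p.2.1 * B * logb 2 (1 + p.2.2 * H / (p.2.1 * δ2)) := by
    refine (((concaveOn_mul_log_one_add_mul_div (div_nonneg hH.le hδ.le)).comp_linearMap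
      (LinearMap.snd ℝ ℝ (ℝ × ℝ))).subset (fun p hp => ⟨hp.2.1, Ioi_subset_Ici_self hp.2.2⟩) hU
      |>.smul (div_nonneg hB.le hlog2.le)).congr fun p _ => ?_
    simp only [Function.comp_apply, LinearMap.snd_apply, smul_eq_mul, logb]
    rw [show p.2.2 * H / (p.2.1 * δ2) = H / δ2 * p.2.2 / p.2.1 by ring]
    ring
  convert (hD.sub hTE).convex_le 0 using 1
  ext p
  simp [U, and_assoc]
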